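/- The correspondence between Neg(A)-minimal models and minimal deletions is surjective: for every minimal instance deletion A' of D from A (in the propositional setting with K* satisfiable together with Neg(D)), there exists a Neg(A)-minimal model M of K* ∪ {Neg(D)} such that A' = A \ Del(M), where Del(M) = { a ∈ A | Neg(a) ∈ M }. -/
import Mathlib


/-- A clause `H ← B`: head and body are finite sets of ground atoms. -/
structure Clause (α : Type) where
  head : Finset α
  body : Finset α
deriving DecidableEq

/-- An interpretation (a set of ground atoms) satisfies the clause `H ← B`. -/
def satClause {α : Type} (I : Set α) (C : Clause α) : Prop :=
  (∀ b ∈ C.body, b ∈ I) → ∃ h ∈ C.head, h ∈ I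

/-- An interpretation satisfies a set of clauses. -/
def satSet {α : Type} (I : Set α) (N : Set (Clause α)) : Prop :=
  ∀ C ∈ N, satClause I C

/-- `T ∪ A ⊨ D`: every model of `T` containing all atoms of `A` satisfies `D`. -/
def entails {α : Type} (T : Set (Clause α)) (A : Set α) (D : α) : Prop :=
  ∀ I : Set α, satSet I T → A ⊆ I → D ∈ I

/-- `T ∪ A` is consistent: some model of `T` contains all atoms of `A`. -/
def consistentWith {α : Type} (T : Set (Clause α)) (A : Set α) : Prop :=
  ∃ I : Set α, satSet I T ∧ A ⊆ I

variable {V : Type} [DecidableEq V]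

/-- Extended signature: original atoms, fresh `Neg`-atoms and fresh
`ABox`-atoms. -/
abbrev Atom (V : Type) : Type := V ⊕ (V ⊕ V)

/-- An original atom. -/
def orig (v : V) : Atom V := Sum.inl v

/-- The fresh atom `Neg(v)`. -/
def neg (v : V) : Atom V := Sum.inr (Sum.inl v)

/-- The fresh atom `ABox(v)`. -/
def abox (v : V) : Atom V := Sum.inr (Sum.inr v)

/-- A clause over `V` viewed over the extended signature. -/
def embedClause (C : Clause V) : Clause (Atom V) :=
  ⟨C.head.image orig, C.body.image orig⟩

/-- The renamed clause `((H \ S) ∪ Neg(B ∩ S)) ← ((B \ S) ∪ Neg(H ∩ S))`. -/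
def renameClause (S : Finset V) (C : Clause V) : Clause (Atom V) :=
  ⟨((C.head \ S).image orig) ∪ ((C.body ∩ S).image neg),
   ((C.body \ S).image orig) ∪ ((C.head ∩ S).image neg)⟩

/-- The exclusion clause `⊥ ← p ∧ Neg(p)`. -/
def exclClause (p : V) : Clause (Atom V) :=
  ⟨∅, {orig p, neg p}⟩

/-- A unit fact `a ← ⊤`. -/
def fact (a : Atom V) : Clause (Atom V) := ⟨{a}, ∅⟩

/-- `K* = R_S(T) ∪ {ABox(a) | a ∈ A}`, where `S` is the set of atoms of the
ABox `A`: each original clause, its renamed version, the exclusion clauses for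
`p ∈ S`, and the fresh `ABox` facts. -/
def Kstar (T : Set (Clause V)) (A : Finset V) : Set (Clause (Atom V)) :=
  (embedClause '' T) ∪ (renameClause A '' T) ∪
    {C | ∃ p ∈ A, C = exclClause p} ∪ {C | ∃ a ∈ A, C = fact (abox a)}

/-- `Del(M) = { a ∈ A | Neg(a) ∈ M }`. -/
def Del (A : Finset V) (M : Set (Atom V)) : Set V :=
  {a : V | a ∈ A ∧ neg a ∈ M}

/-- for every minimal instance deletion `A'` of `D` from `A`
(with `K* ∪ {Neg(D)}` satisfiable), there exists a `Neg(A)`-minimal model `M`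
of `K* ∪ {Neg(D)}` with `A' = A \ Del(M)`. -/
theorem minimal_deletion_from_negA_minimal_model
    (T : Set (Clause V)) (A : Finset V) (D : V) (hD : D ∈ A)
    (hsat : ∃ M : Set (Atom V), satSet M (Kstar T A ∪ {fact (neg D)}))
    (A' : Finset V) (hsub : A' ⊆ A) (hdel : ¬ entails T ↑A' D)
    (hmax : ∀ A'' : Finset V, A' ⊂ A'' → A'' ⊆ A → entails T ↑A'' D) :
    ∃ M : Set (Atom V), satSet M (Kstar T A ∪ {fact (neg D)}) ∧
      (¬ ∃ M' : Set (Atom V), satSet M' (Kstar T A ∪ {fact (neg D)}) ∧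
          M' ∩ (neg '' (↑A : Set V)) ⊂ M ∩ (neg '' (↑A : Set V))) ∧
      (↑A' : Set V) = (↑A : Set V) \ Del A M := by
  classical
  -- extract a countermodel I : T ∪ A' ⊭ D
  rw [entails] at hdel
  push_neg at hdel
  obtain ⟨I, hIT, hA'I, hDI⟩ := hdel
  -- maximality: any a ∈ A ∩ I lies in A'
  have hAI : ∀ a ∈ A, a ∈ I → a ∈ A' := by
    intro a haA haI
    by_contra haA'
    have hss : A' ⊂ insert a A' := Finset.ssubset_insert haA'
    have hsubA : insert a A' ⊆ A := Finset.insert_subset haA hsub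
    refine hDI (hmax (insert a A') hss hsubA I hIT ?_)
    intro x hx
    simp only [Finset.coe_insert, Set.mem_insert_iff] at hx
    rcases hx with rfl | hx
    · exact haI
    · exact hA'I hx
  -- the model M
  set M : Set (Atom V) :=
    {x | (∃ v ∈ I, x = orig v) ∨ (∃ v, v ∈ A ∧ v ∉ I ∧ x = neg v) ∨ (∃ v, x = abox v)}
    with hMdef
  have horigM : ∀ v : V, orig v ∈ M ↔ v ∈ I := by
    intro v
    simp only [hMdef, Set.mem_setOf_eq, orig, neg, abox, Sum.inl.injEq]
    constructor
    · rintro (⟨w, hw, h⟩ | ⟨w, _, _, h⟩ | ⟨w, h⟩)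
      · cases h; exact hw
      · exact absurd h (by simp)
      · exact absurd h (by simp)
    · intro hv; exact Or.inl ⟨v, hv, rfl⟩
  have hnegM : ∀ v : V, neg v ∈ M ↔ (v ∈ A ∧ v ∉ I) := by
    intro v
    simp only [hMdef, Set.mem_setOf_eq, orig, neg, abox]
    constructor
    · rintro (⟨w, hw, h⟩ | ⟨w, h1, h2, h⟩ | ⟨w, h⟩)
      · exact absurd h (by simp)
      · obtain rfl : v = w := by simpa using h
        exact ⟨h1, h2⟩
      · exact absurd h (by simp)
    · intro hv; exact Or.inr (Or.inl ⟨v, hv.1, hv.2, rfl⟩)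
  have haboxM : ∀ v : V, abox v ∈ M := fun v => Or.inr (Or.inr ⟨v, rfl⟩)
  -- M is a model of K* ∪ {Neg(D)}
  have hMmodel : satSet M (Kstar T A ∪ {fact (neg D)}) := by
    intro C hC
    rcases hC with hC | hC
    · rcases hC with ((hC | hC) | hC) | hC
      · -- embedded clause
        obtain ⟨C', hC'T, rfl⟩ := hC
        intro hbody
        have hb : ∀ b ∈ C'.body, b ∈ I := by
          intro b hb
          have := hbody (orig b) (by simp [embedClause, Finset.mem_image]; exact ⟨b, hb, rfl⟩)
          exact (horigM b).1 this
        obtain ⟨h, hh, hhI⟩ := hIT C' hC'T hb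
        exact ⟨orig h, by simp [embedClause, Finset.mem_image]; exact ⟨h, hh, rfl⟩,
          (horigM h).2 hhI⟩
      · -- renamed clause
        obtain ⟨C', hC'T, rfl⟩ := hC
        intro hbody
        -- from the body: B \ A ⊆ I and (H ∩ A) ∩ I = ∅
        have hBdiff : ∀ b ∈ C'.body, b ∉ A → b ∈ I := by
          intro b hb hbA
          have := hbody (orig b) ?_
          · exact (horigM b).1 this
          · simp only [renameClause, Finset.mem_union, Finset.mem_image]
            exact Or.inl ⟨b, Finset.mem_sdiff.2 ⟨hb, hbA⟩, rfl⟩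
        have hHA : ∀ h ∈ C'.head, h ∈ A → h ∉ I := by
          intro h hh hhA
          have := hbody (neg h) ?_
          · exact ((hnegM h).1 this).2
          · simp only [renameClause, Finset.mem_union, Finset.mem_image]
            exact Or.inr ⟨h, Finset.mem_inter.2 ⟨hh, hhA⟩, rfl⟩
        by_cases hcase : ∃ b ∈ C'.body, b ∈ A ∧ b ∉ I
        · obtain ⟨b, hb, hbA, hbI⟩ := hcase
          refine ⟨neg b, ?_, (hnegM b).2 ⟨hbA, hbI⟩⟩
          simp only [renameClause, Finset.mem_union, Finset.mem_image]
          exact Or.inr ⟨b, Finset.mem_inter.2 ⟨hb, hbA⟩, rfl⟩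
        · push_neg at hcase
          have hbI : ∀ b ∈ C'.body, b ∈ I := by
            intro b hb
            by_cases hbA : b ∈ A
            · exact hcase b hb hbA
            · exact hBdiff b hb hbA
          obtain ⟨h, hh, hhI⟩ := hIT C' hC'T hbI
          have hhA : h ∉ A := fun hA => hHA h hh hA hhI
          refine ⟨orig h, ?_, (horigM h).2 hhI⟩
          simp only [renameClause, Finset.mem_union, Finset.mem_image]
          exact Or.inl ⟨h, Finset.mem_sdiff.2 ⟨hh, hhA⟩, rfl⟩
      · -- exclusion clause
        obtain ⟨p, hpA, rfl⟩ := hC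
        intro hbody
        exfalso
        have h1 : orig p ∈ M := hbody (orig p) (by simp [exclClause])
        have h2 : neg p ∈ M := hbody (neg p) (by simp [exclClause])
        exact ((hnegM p).1 h2).2 ((horigM p).1 h1)
      · -- abox facts
        obtain ⟨a, haA, rfl⟩ := hC
        intro _
        exact ⟨abox a, by simp [fact], haboxM a⟩
    · -- the fact Neg(D)
      simp only [Set.mem_singleton_iff] at hC
      subst hC
      intro _
      exact ⟨neg D, by simp [fact], (hnegM D).2 ⟨hD, hDI⟩⟩
  refine ⟨M, hMmodel, ?_, ?_⟩
  · -- minimality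
    rintro ⟨M', hM', hss⟩
    -- the countermodel obtained from M'
    set J : Set V := {v | (v ∈ A ∧ neg v ∉ M') ∨ (v ∉ A ∧ orig v ∈ M')} with hJdef
    have hnegD' : neg D ∈ M' := by
      have := hM' (fact (neg D)) (Or.inr rfl)
      obtain ⟨h, hh, hhM⟩ := this (by simp [fact])
      simp only [fact, Finset.mem_singleton] at hh
      subst hh; exact hhM
    -- J is a model of T
    have hJT : satSet J T := by
      intro C' hC'T hbody
      by_contra hhead
      push_neg at hhead
      -- apply the renamed clause in M'
      have hren := hM' (renameClause A C') (Or.inl (Or.inl (Or.inl (Or.inr ⟨C', hC'T, rfl⟩))))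
      have hbody' : ∀ b ∈ (renameClause A C').body, b ∈ M' := by
        intro b hb
        simp only [renameClause, Finset.mem_union, Finset.mem_image] at hb
        rcases hb with ⟨w, hw, rfl⟩ | ⟨w, hw, rfl⟩
        · -- w ∈ body \ A : w ∈ J, so orig w ∈ M'
          obtain ⟨hwB, hwA⟩ := Finset.mem_sdiff.1 hw
          have hwJ := hbody w hwB
          rcases hwJ with ⟨hwA', _⟩ | ⟨_, hwM⟩
          · exact absurd hwA' hwA
          · exact hwM
        · -- w ∈ head ∩ A : w ∉ J, so neg w ∈ M'
          obtain ⟨hwH, hwA⟩ := Finset.mem_inter.1 hw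
          have hwJ := hhead w hwH
          by_contra hnw
          exact hwJ (Or.inl ⟨hwA, hnw⟩)
      obtain ⟨h, hh, hhM⟩ := hren hbody'
      simp only [renameClause, Finset.mem_union, Finset.mem_image] at hh
      rcases hh with ⟨w, hw, rfl⟩ | ⟨w, hw, rfl⟩
      · -- orig w with w ∈ head \ A : then w ∈ J, contradicting hhead
        obtain ⟨hwH, hwA⟩ := Finset.mem_sdiff.1 hw
        exact hhead w hwH (Or.inr ⟨hwA, hhM⟩)
      · -- neg w with w ∈ body ∩ A : but w ∈ J means neg w ∉ M'
        obtain ⟨hwB, hwA⟩ := Finset.mem_inter.1 hw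
        have hwJ := hbody w hwB
        rcases hwJ with ⟨_, hnw⟩ | ⟨hwA', _⟩
        · exact hnw hhM
        · exact hwA' hwA
    -- the finset A'' = {a ∈ A | a ∈ J}
    set A'' : Finset V := A.filter (fun a => a ∈ J) with hA''def
    have hA''A : A'' ⊆ A := Finset.filter_subset _ _
    have hA''J : (↑A'' : Set V) ⊆ J := by
      intro a ha
      simp only [hA''def, Finset.coe_filter, Set.mem_setOf_eq] at ha
      exact ha.2
    have hsubss : M' ∩ (neg '' (↑A : Set V)) ⊆ M ∩ (neg '' (↑A : Set V)) := hss.1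
    -- A' ⊆ A''
    have hA'A'' : A' ⊆ A'' := by
      intro a ha
      have haA : a ∈ A := hsub ha
      have haI : a ∈ I := hA'I (by exact_mod_cast ha)
      have hnM : neg a ∉ M := fun h => ((hnegM a).1 h).2 haI
      have hnM' : neg a ∉ M' := by
        intro h
        exact hnM (hsubss ⟨h, ⟨a, by exact_mod_cast haA, rfl⟩⟩).1
      simp only [hA''def, Finset.mem_filter]
      exact ⟨haA, Or.inl ⟨haA, hnM'⟩⟩
    -- strictness: some a ∈ A with neg a ∈ M but neg a ∉ M'
    obtain ⟨x, hxM, hxM'⟩ := Set.exists_of_ssubset hss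
    obtain ⟨a, haA, rfl⟩ : ∃ a ∈ (↑A : Set V), neg a = x := by
      obtain ⟨a, haA, h⟩ := hxM.2
      exact ⟨a, haA, h⟩
    have haAf : a ∈ A := by exact_mod_cast haA
    have hnaM : neg a ∈ M := hxM.1
    have hnaM' : neg a ∉ M' := fun h => hxM' ⟨h, ⟨a, haA, rfl⟩⟩
    have haI : a ∉ I := ((hnegM a).1 hnaM).2
    have haA' : a ∉ A' := fun h => haI (hA'I (by exact_mod_cast h))
    have haA'' : a ∈ A'' := by
      simp only [hA''def, Finset.mem_filter]
      exact ⟨haAf, Or.inl ⟨haAf, hnaM'⟩⟩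
    have hssA : A' ⊂ A'' := ⟨hA'A'', fun h => haA' (h haA'')⟩
    -- contradiction with maximality
    have hDJ : D ∈ J := hmax A'' hssA hA''A J hJT hA''J
    rcases hDJ with ⟨_, hn⟩ | ⟨hDA, _⟩
    · exact hn hnegD'
    · exact hDA hD
  · -- A' = A \ Del(M)
    ext a
    simp only [Set.mem_diff, Finset.mem_coe, Del, Set.mem_setOf_eq]
    constructor
    · intro ha
      have haA : a ∈ A := hsub ha
      have haI : a ∈ I := hA'I (by exact_mod_cast ha)
      exact ⟨haA, fun h => ((hnegM a).1 h.2).2 haI⟩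
    · rintro ⟨haA, hnot⟩
      have haI : a ∈ I := by
        by_contra haI
        exact hnot ⟨haA, (hnegM a).2 ⟨haA, haI⟩⟩
      exact hAI a haA haI
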